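/- arXiv:1607.08047 — 5 statements merged into one kernel-verified Lean document; each statement's English description precedes it below -/
import Mathlib

section
/- Let S, T, n be elements of SL(2,ℂ) such that nS = S⁻¹n, nT = T⁻¹n, and n² = −I. Set W = S⁻¹(STS⁻¹T⁻¹)²(ST⁻¹S⁻¹T)². Then SWS⁻¹W⁻¹ = −(SWn)². -/
open Matrix

instance : Fact (Even 2) := ⟨⟨1, rfl⟩⟩

/-- Let `S, T, n ∈ SL(2,ℂ)` with `nS = S⁻¹n`, `nT = T⁻¹n` and `n² = -I`.
Set `W = S⁻¹(STS⁻¹T⁻¹)²(ST⁻¹S⁻¹T)²`. Then `SWS⁻¹W⁻¹ = -(SWn)²`. -/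
theorem stmt_0 (S T n : Matrix.SpecialLinearGroup (Fin 2) ℂ)
    (hS : n * S = S⁻¹ * n) (hT : n * T = T⁻¹ * n) (hn : n ^ 2 = -1)
    (W : Matrix.SpecialLinearGroup (Fin 2) ℂ)
    (hW : W = S⁻¹ * (S * T * S⁻¹ * T⁻¹) ^ 2 * (S * T⁻¹ * S⁻¹ * T) ^ 2) :
    S * W * S⁻¹ * W⁻¹ = -((S * W * n) ^ 2) := by
  have cS : MulAut.conj n S = S⁻¹ := by
    simp [MulAut.conj_apply, hS, mul_assoc]
  have cT : MulAut.conj n T = T⁻¹ := by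
    simp [MulAut.conj_apply, hT, mul_assoc]
  have cW : MulAut.conj n W = W⁻¹ := by
    rw [hW]
    simp only [_root_.map_mul, map_inv, map_pow, cS, cT, pow_two, _root_.mul_inv_rev]
    group
  have hnW : n * W = W⁻¹ * n := by
    have := cW
    rw [MulAut.conj_apply] at this
    rw [← this]
    group
  have hsq : (S * W * n) ^ 2 = S * W * S⁻¹ * W⁻¹ * n ^ 2 := by
    rw [pow_two, pow_two]
    calc S * W * n * (S * W * n) = S * W * (n * S) * (W * n) := by
          simp only [mul_assoc]
    _ = S * W * (S⁻¹ * n) * (W * n) := by rw [hS]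
    _ = S * W * S⁻¹ * (n * W) * n := by simp only [mul_assoc]
    _ = S * W * S⁻¹ * (W⁻¹ * n) * n := by rw [hnW]
    _ = S * W * S⁻¹ * W⁻¹ * (n * n) := by simp only [mul_assoc]
  rw [hsq, hn, mul_neg, mul_one, neg_neg]
end

section
/- Let S, T, n be elements of SL(2,ℂ) such that nS = S⁻¹n, nT = T⁻¹n, and n² = −I. Set W = S⁻¹(STS⁻¹T⁻¹)²(ST⁻¹S⁻¹T)². Then the relation SWS⁻¹W⁻¹ = I holds if and only if tr(SWn) = 0. -/
open Matrix

/-- Cayley–Hamilton for a `2 × 2` complex matrix of determinant one. -/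
lemma CH2 (M : Matrix (Fin 2) (Fin 2) ℂ) (h : M.det = 1) :
    M * M = M.trace • M - 1 := by
  rw [Matrix.det_fin_two] at h
  ext i j
  fin_cases i <;> fin_cases j <;>
    simp [Matrix.mul_apply, Fin.sum_univ_succ, Matrix.trace_fin_two,
      Matrix.one_apply, Matrix.sub_apply, Matrix.smul_apply, smul_eq_mul] <;>
    first | ring1 | linear_combination -h

/-- For a determinant-one `2 × 2` complex matrix, trace zero iff square is `-1`. -/
lemma sq_eq_neg_one_iff (M : Matrix (Fin 2) (Fin 2) ℂ) (h : M.det = 1) :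
    M * M = -1 ↔ M.trace = 0 := by
  constructor
  · intro hsq
    have hch := CH2 M h
    rw [hsq] at hch
    have htr := congrArg Matrix.trace hch
    rw [Matrix.trace_sub, Matrix.trace_smul, Matrix.trace_neg, Matrix.trace_one] at htr
    simp only [smul_eq_mul, Fintype.card_fin] at htr
    have h0 : M.trace * M.trace = 0 := by linear_combination -htr
    exact mul_self_eq_zero.mp h0
  · intro htr
    rw [CH2 M h, htr, zero_smul, zero_sub]

/-- Let `S, T, n ∈ SL(2,ℂ)` with `nS = S⁻¹n`, `nT = T⁻¹n` and `n² = -I`.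
Set `W = S⁻¹(STS⁻¹T⁻¹)²(ST⁻¹S⁻¹T)²`. Then `SWS⁻¹W⁻¹ = I` iff `tr(SWn) = 0`. -/
theorem stmt_2 (S T n : Matrix.SpecialLinearGroup (Fin 2) ℂ)
    (hS : n * S = S⁻¹ * n) (hT : n * T = T⁻¹ * n) (hn : n ^ 2 = -1)
    (W : Matrix.SpecialLinearGroup (Fin 2) ℂ)
    (hW : W = S⁻¹ * (S * T * S⁻¹ * T⁻¹) ^ 2 * (S * T⁻¹ * S⁻¹ * T) ^ 2) :
    S * W * S⁻¹ * W⁻¹ = 1 ↔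
      Matrix.trace ((S * W * n : Matrix.SpecialLinearGroup (Fin 2) ℂ) :
        Matrix (Fin 2) (Fin 2) ℂ) = 0 := by
  have hS2 : n * S⁻¹ = S * n := by
    have h := congrArg (fun x => S * x * S⁻¹) hS
    simpa [mul_assoc] using h.symm
  have hT2 : n * T⁻¹ = T * n := by
    have h := congrArg (fun x => T * x * T⁻¹) hT
    simpa [mul_assoc] using h.symm
  have hS1' : ∀ x, n * (S * x) = S⁻¹ * (n * x) := fun x => by
    rw [← mul_assoc, hS, mul_assoc]
  have hS2' : ∀ x, n * (S⁻¹ * x) = S * (n * x) := fun x => by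
    rw [← mul_assoc, hS2, mul_assoc]
  have hT1' : ∀ x, n * (T * x) = T⁻¹ * (n * x) := fun x => by
    rw [← mul_assoc, hT, mul_assoc]
  have hT2' : ∀ x, n * (T⁻¹ * x) = T * (n * x) := fun x => by
    rw [← mul_assoc, hT2, mul_assoc]
  have hcomm : n * W = W⁻¹ * n := by
    subst hW
    simp only [_root_.mul_inv_rev, mul_inv_cancel_left, inv_mul_cancel_left, inv_inv,
      pow_two, mul_assoc, hS, hS2, hT, hT2, hS1', hS2', hT1', hT2']
  -- key identity : (SWn)² = (SWS⁻¹W⁻¹) * (-1)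
  have hkey : (S * W * n) * (S * W * n) = (S * W * S⁻¹ * W⁻¹) * (-1) := by
    have hnn : n * n = -1 := by rw [← pow_two]; exact hn
    calc (S * W * n) * (S * W * n)
        = S * W * (n * S) * W * n := by group
      _ = S * W * (S⁻¹ * n) * W * n := by rw [hS]
      _ = S * W * S⁻¹ * (n * W) * n := by group
      _ = S * W * S⁻¹ * (W⁻¹ * n) * n := by rw [hcomm]
      _ = S * W * S⁻¹ * W⁻¹ * (n * n) := by group
      _ = (S * W * S⁻¹ * W⁻¹) * (-1) := by rw [hnn]
  have hdet : ((S * W * n : Matrix.SpecialLinearGroup (Fin 2) ℂ) :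
      Matrix (Fin 2) (Fin 2) ℂ).det = 1 := (S * W * n).property
  rw [← sq_eq_neg_one_iff _ hdet]
  constructor
  · intro h1
    have : (S * W * n) * (S * W * n) = -1 := by rw [hkey, h1, one_mul]
    have := congrArg (fun g : Matrix.SpecialLinearGroup (Fin 2) ℂ =>
      (g : Matrix (Fin 2) (Fin 2) ℂ)) this
    simpa using this
  · intro h2
    have hgrp : (S * W * n) * (S * W * n) = -1 := by
      ext i j
      have := congrFun (congrFun h2 i) j
      simpa using this
    rw [hkey] at hgrp
    have : (S * W * S⁻¹ * W⁻¹) * (-1) = 1 * (-1) := by rw [one_mul]; exact hgrp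
    exact mul_right_cancel this
end

section
/- Let S, T be elements of any group and set L_T = T⁻¹(TST⁻¹S⁻¹)²(TS⁻¹T⁻¹S)²T and g = T⁻¹S⁻¹TST⁻¹S⁻¹T. Then S⁻¹L_T = g S⁻¹ g⁻¹; in particular S⁻¹L_T is conjugate to S⁻¹. -/
/-- In any group, with `L_T = T⁻¹(TST⁻¹S⁻¹)²(TS⁻¹T⁻¹S)²T` and
`g = T⁻¹S⁻¹TST⁻¹S⁻¹T`, one has `S⁻¹L_T = g S⁻¹ g⁻¹`; in particular
`S⁻¹L_T` is conjugate to `S⁻¹`. -/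
theorem stmt_6 {G : Type*} [Group G] (S T : G)
    (LT g : G)
    (hLT : LT = T⁻¹ * (T * S * T⁻¹ * S⁻¹) ^ 2 * (T * S⁻¹ * T⁻¹ * S) ^ 2 * T)
    (hg : g = T⁻¹ * S⁻¹ * T * S * T⁻¹ * S⁻¹ * T) :
    S⁻¹ * LT = g * S⁻¹ * g⁻¹ ∧ IsConj (S⁻¹) (S⁻¹ * LT) := by
  have h : S⁻¹ * LT = g * S⁻¹ * g⁻¹ := by
    subst hLT hg; simp only [pow_two]; group
  exact ⟨h, isConj_iff.mpr ⟨g, h.symm⟩⟩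
end

section
/- Let S, T ∈ SL(2,ℂ) and set L_T = T⁻¹(TST⁻¹S⁻¹)²(TS⁻¹T⁻¹S)²T and L_S = S⁻¹(STS⁻¹T⁻¹)²(ST⁻¹S⁻¹T)²S. Then tr(S⁻¹L_T) = tr(S) and tr(T⁻¹L_S) = tr(T). -/
open Matrix

lemma conj_aux {G : Type*} [Group G] (S T : G) :
    S⁻¹ * (T⁻¹ * (T * S * T⁻¹ * S⁻¹) ^ 2 * (T * S⁻¹ * T⁻¹ * S) ^ 2 * T) =
      (T⁻¹ * S⁻¹ * (T * S * T⁻¹ * S⁻¹) * T) * S⁻¹ *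
        (T⁻¹ * S⁻¹ * (T * S * T⁻¹ * S⁻¹) * T)⁻¹ := by
  simp only [sq]
  group

lemma trace_conj_inv (g A : Matrix.SpecialLinearGroup (Fin 2) ℂ) :
    Matrix.trace ((g * A⁻¹ * g⁻¹ : Matrix.SpecialLinearGroup (Fin 2) ℂ) :
      Matrix (Fin 2) (Fin 2) ℂ) = Matrix.trace (A : Matrix (Fin 2) (Fin 2) ℂ) := by
  have h1 : ((g * A⁻¹ * g⁻¹ : Matrix.SpecialLinearGroup (Fin 2) ℂ) :
      Matrix (Fin 2) (Fin 2) ℂ) = (g : Matrix (Fin 2) (Fin 2) ℂ) * (A⁻¹ : _) * (g⁻¹ : _) := by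
    simp
  rw [h1, Matrix.trace_mul_cycle]
  have h2 : ((g⁻¹ : Matrix.SpecialLinearGroup (Fin 2) ℂ) : Matrix (Fin 2) (Fin 2) ℂ) *
      (g : Matrix (Fin 2) (Fin 2) ℂ) = 1 := by
    rw [← Matrix.SpecialLinearGroup.coe_mul, inv_mul_cancel,
      Matrix.SpecialLinearGroup.coe_one]
  rw [Matrix.trace_mul_comm, h2, mul_one]
  rw [Matrix.SpecialLinearGroup.coe_inv, Matrix.adjugate_fin_two, Matrix.trace_fin_two,
    Matrix.trace_fin_two]
  simp [add_comm]

/-- For `S, T ∈ SL(2,ℂ)`, with `L_T = T⁻¹(TST⁻¹S⁻¹)²(TS⁻¹T⁻¹S)²T` and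
`L_S = S⁻¹(STS⁻¹T⁻¹)²(ST⁻¹S⁻¹T)²S`, one has `tr(S⁻¹L_T) = tr S` and
`tr(T⁻¹L_S) = tr T`. -/
theorem stmt_7 (S T : Matrix.SpecialLinearGroup (Fin 2) ℂ)
    (LT LS : Matrix.SpecialLinearGroup (Fin 2) ℂ)
    (hLT : LT = T⁻¹ * (T * S * T⁻¹ * S⁻¹) ^ 2 * (T * S⁻¹ * T⁻¹ * S) ^ 2 * T)
    (hLS : LS = S⁻¹ * (S * T * S⁻¹ * T⁻¹) ^ 2 * (S * T⁻¹ * S⁻¹ * T) ^ 2 * S) :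
    Matrix.trace ((S⁻¹ * LT : Matrix.SpecialLinearGroup (Fin 2) ℂ) : Matrix (Fin 2) (Fin 2) ℂ) =
        Matrix.trace (S : Matrix (Fin 2) (Fin 2) ℂ) ∧
      Matrix.trace ((T⁻¹ * LS : Matrix.SpecialLinearGroup (Fin 2) ℂ) : Matrix (Fin 2) (Fin 2) ℂ) =
        Matrix.trace (T : Matrix (Fin 2) (Fin 2) ℂ) := by
  subst hLT hLS
  constructor
  · rw [conj_aux S T, trace_conj_inv]
  · rw [conj_aux T S, trace_conj_inv]
end

section
/- Let α, γ ∈ ℂ with sin(α/2) ≠ 0, sinh(γ/2) ≠ 0, and cosh(γ/4) ≠ 0. Let S ∈ SL(2,ℂ) with tr(S) = 2 cos(α/2), let L be the diagonal matrix diag(e^{γ/2}, e^{−γ/2}), and suppose tr(S⁻¹L) = tr(S). Define the line matrices l(S) = (S − S⁻¹)/(2i sinh(iα/2)) and l(L) = (L − L⁻¹)/(2i sinh(γ/2)). Then −tr(l(S) l(L))/2 = −i cot(α/2) tanh(γ/4). -/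
/-!
Write `S = !![a, b; c, d]` and `x = exp (γ / 2)`. The hypothesis `tr (S⁻¹ L) = tr S` reads
`d x + a / x = a + d`, i.e. `(x - 1) (d x - a) = 0`, so `a = d x` because `x ≠ 1`. Hence
`(a - d) (x + 1) = (a + d) (x - 1)`, and `(x - 1) / (x + 1) = tanh (γ / 4)` turns this into
`a - d = 2 cos (α / 2) tanh (γ / 4)`. On the other side `l(L) = -i · diag (1, -1)`, so
`tr (l(S) l(L))` only sees `a - d`.
-/

open Matrix Complex
open scoped MatrixGroups

namespace Matrix.SpecialLinearGroup

variable {R : Type*} [CommRing R]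

theorem trace_inv_mul_diagonal_fin_two (S : SL(2, R)) (p q : R) :
    trace ((↑S⁻¹ : Matrix (Fin 2) (Fin 2) R) * diagonal ![p, q]) = S 1 1 * p + S 0 0 * q := by
  rw [trace_fin_two, mul_diagonal, mul_diagonal, coe_inv, adjugate_fin_two]
  simp

theorem trace_sub_inv_mul_diagonal_fin_two (S : SL(2, R)) (p q : R) :
    trace (((S : Matrix (Fin 2) (Fin 2) R) - (↑S⁻¹ : Matrix (Fin 2) (Fin 2) R)) *
        diagonal ![p, q]) =
      (S 0 0 - S 1 1) * (p - q) := by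
  rw [trace_fin_two, mul_diagonal, mul_diagonal, sub_apply, sub_apply, coe_inv, adjugate_fin_two]
  simp
  ring

theorem sub_mul_add_one_of_trace_inv_mul_diagonal {K : Type*} [Field K] (S : SL(2, K)) {x : K}
    (hx0 : x ≠ 0) (hx1 : x ≠ 1)
    (h : trace ((↑S⁻¹ : Matrix (Fin 2) (Fin 2) K) * diagonal ![x, x⁻¹]) =
      trace (S : Matrix (Fin 2) (Fin 2) K)) :
    (S 0 0 - S 1 1) * (x + 1) = trace (S : Matrix (Fin 2) (Fin 2) K) * (x - 1) := by
  rw [trace_inv_mul_diagonal_fin_two, trace_fin_two] at h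
  have hdiag : S 0 0 = x * S 1 1 := by
    have : (x - 1) * (x * S 1 1 - S 0 0) = 0 := by
      field_simp at h
      linear_combination h
    exact (sub_eq_zero.1 ((mul_eq_zero.1 this).resolve_left (sub_ne_zero.2 hx1))).symm
  rw [trace_fin_two, hdiag]
  ring

end Matrix.SpecialLinearGroup

namespace Complex

theorem exp_two_mul_add_one (y : ℂ) : exp (2 * y) + 1 = 2 * exp y * cosh y := by
  rw [two_mul, exp_add, ← cosh_add_sinh]
  linear_combination -cosh_sq_sub_sinh_sq y

theorem exp_two_mul_sub_one (y : ℂ) : exp (2 * y) - 1 = 2 * exp y * sinh y := by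
  rw [two_mul, exp_add, ← cosh_add_sinh]
  linear_combination cosh_sq_sub_sinh_sq y

theorem diagonal_exp_sub_inv (z : ℂ) :
    diagonal ![exp z, exp (-z)] - (diagonal ![exp z, exp (-z)])⁻¹ =
      (2 * sinh z) • diagonal ![1, -1] := by
  have hinv : (diagonal ![exp z, exp (-z)])⁻¹ = diagonal ![exp (-z), exp z] := by
    refine inv_eq_left_inv ?_
    rw [diagonal_mul_diagonal, ← diagonal_one]
    congr 1
    ext i
    fin_cases i <;> simp [← exp_add]
  rw [hinv, diagonal_sub, ← diagonal_smul]
  congr 1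
  ext i
  fin_cases i <;> simp [sinh] <;> ring

end Complex

/-- Pythagorean theorem computation: for `S ∈ SL(2,ℂ)` with `tr S = 2cos(α/2)`,
`L = diag(e^{γ/2}, e^{-γ/2})` with `tr(S⁻¹L) = tr S`, and line matrices
`l(S) = (S - S⁻¹)/(2i sinh(iα/2))`, `l(L) = (L - L⁻¹)/(2i sinh(γ/2))`, one has
`-tr(l(S)l(L))/2 = -i cot(α/2) tanh(γ/4)`. -/
theorem stmt_10 (α γ : ℂ) (hsin : Complex.sin (α / 2) ≠ 0)
    (hsinh : Complex.sinh (γ / 2) ≠ 0) (hcosh : Complex.cosh (γ / 4) ≠ 0)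
    (S : Matrix.SpecialLinearGroup (Fin 2) ℂ)
    (htrS : Matrix.trace (S : Matrix (Fin 2) (Fin 2) ℂ) = 2 * Complex.cos (α / 2))
    (L : Matrix (Fin 2) (Fin 2) ℂ)
    (hLdef : L = !![Complex.exp (γ / 2), 0; 0, Complex.exp (-(γ / 2))])
    (htrSL : Matrix.trace (((S⁻¹ : Matrix.SpecialLinearGroup (Fin 2) ℂ) :
        Matrix (Fin 2) (Fin 2) ℂ) * L) = Matrix.trace (S : Matrix (Fin 2) (Fin 2) ℂ))
    (lS lL : Matrix (Fin 2) (Fin 2) ℂ)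
    (hlS : lS = (2 * Complex.I * Complex.sinh (Complex.I * α / 2))⁻¹ •
      ((S : Matrix (Fin 2) (Fin 2) ℂ) -
        ((S⁻¹ : Matrix.SpecialLinearGroup (Fin 2) ℂ) : Matrix (Fin 2) (Fin 2) ℂ)))
    (hlL : lL = (2 * Complex.I * Complex.sinh (γ / 2))⁻¹ • (L - L⁻¹)) :
    -Matrix.trace (lS * lL) / 2 =
      -Complex.I * (Complex.cos (α / 2) / Complex.sin (α / 2)) * Complex.tanh (γ / 4) := by
  have hγ : γ / 2 = 2 * (γ / 4) := by ring
  have hL : L = diagonal ![exp (γ / 2), exp (-(γ / 2))] := by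
    rw [hLdef, diagonal_fin_two]; rfl
  have hsinh4 : sinh (γ / 4) ≠ 0 := fun h => hsinh (by rw [hγ, sinh_two_mul, h]; ring)
  have hx1 : exp (2 * (γ / 4)) ≠ 1 := by
    rw [← sub_ne_zero, exp_two_mul_sub_one]
    exact mul_ne_zero (mul_ne_zero two_ne_zero (exp_ne_zero _)) hsinh4
  have hS := SpecialLinearGroup.sub_mul_add_one_of_trace_inv_mul_diagonal S (exp_ne_zero _) hx1
    (by rwa [hL, exp_neg, hγ] at htrSL)
  rw [exp_two_mul_add_one, exp_two_mul_sub_one, htrS] at hS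
  have hδ : S 0 0 - S 1 1 = 2 * cos (α / 2) * tanh (γ / 4) := by
    rw [tanh_eq_sinh_div_cosh, mul_div_assoc', eq_div_iff hcosh]
    refine mul_left_cancel₀ (mul_ne_zero two_ne_zero (exp_ne_zero (γ / 4))) ?_
    linear_combination hS
  have hlL' : lL = (-I) • diagonal ![1, -1] := by
    rw [hlL, hL, diagonal_exp_sub_inv, smul_smul]
    congr 1
    field_simp
    rw [I_sq]; ring
  have hsI : sinh (I * α / 2) = sin (α / 2) * I := by
    rw [← sinh_mul_I]; ring_nf
  rw [hlS, hlL', smul_mul_smul_comm, trace_smul, smul_eq_mul,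
    SpecialLinearGroup.trace_sub_inv_mul_diagonal_fin_two, hδ, hsI]
  field_simp
  rw [I_sq]; ring
end
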